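/- Confusion Entropy violates the triangle inequality (and hence does not have the distance property): for the binary labelings A = (1,1,0), B = (1,1,1), C = (1,0,1) of 3 elements, CE(A,C) = 1 while CE(A,B) = CE(B,C) = (2/3)·log_2(3) − 2/3 < 1/2, so CE(A,C) > CE(A,B) + CE(B,C). -/
import Mathlib


/-- One term of the Confusion Entropy, with the convention 0·log 0 = 0. -/
noncomputable def ceTerm (c d : ℝ) : ℝ :=
  if c = 0 then 0 else c * Real.logb 2 (c / d)

/-- Binary Confusion Entropy (m = 2, so the logarithm base is 2m − 2 = 2):
CE = −(1/(2n))·Σ_{i≠j}(c_{ji}·log₂(c_{ji}/(a_j+b_j)) + c_{ij}·log₂(c_{ij}/(a_j+b_j))). -/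
noncomputable def CEbin (c11 c10 c01 c00 : ℝ) : ℝ :=
  -(1 / (2 * (c11 + c10 + c01 + c00))) *
    (ceTerm c10 ((c01 + c00) + (c10 + c00)) + ceTerm c01 ((c01 + c00) + (c10 + c00)) +
     ceTerm c01 ((c11 + c10) + (c11 + c01)) + ceTerm c10 ((c11 + c10) + (c11 + c01)))

lemma ce_ac : CEbin 1 1 1 0 = 1 := by
  unfold CEbin ceTerm
  norm_num
  rw [show (1:ℝ)/2 = (2:ℝ)⁻¹ by norm_num, show (1:ℝ)/4 = ((2:ℝ)^2)⁻¹ by norm_num,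
      Real.logb_inv, Real.logb_inv, Real.logb_pow,
      Real.logb_self_eq_one (by norm_num)]
  ring

lemma ce_ab : CEbin 2 0 1 0 = Real.logb 2 5 / 6 := by
  unfold CEbin ceTerm
  norm_num
  rw [show (1:ℝ)/5 = (5:ℝ)⁻¹ by norm_num, Real.logb_inv]; ring

lemma ce_bc : CEbin 2 1 0 0 = Real.logb 2 5 / 6 := by
  unfold CEbin ceTerm
  norm_num
  rw [show (1:ℝ)/5 = (5:ℝ)⁻¹ by norm_num, Real.logb_inv]; ring

lemma logb5_lt : Real.logb 2 5 < 3 := by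
  have : Real.logb 2 5 < Real.logb 2 8 := by
    apply Real.logb_lt_logb (by norm_num) (by norm_num) (by norm_num)
  calc Real.logb 2 5 < Real.logb 2 8 := this
    _ = 3 := by
        rw [show (8:ℝ) = 2^3 by norm_num, Real.logb_pow,
            Real.logb_self_eq_one (by norm_num)]; norm_num

/-- Confusion Entropy violates the triangle inequality: for the binary labelings
A = (1,1,0), B = (1,1,1), C = (1,0,1), whose confusion matrices are
(A,C) = (1,1,1,0), (A,B) = (2,0,1,0), (B,C) = (2,1,0,0), we have CE(A,C) = 1,
CE(A,B) = CE(B,C) < 1/2, and CE(A,C) > CE(A,B) + CE(B,C). -/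
theorem ce_not_distance :
    CEbin 1 1 1 0 = 1 ∧
    CEbin 2 0 1 0 = CEbin 2 1 0 0 ∧
    CEbin 2 0 1 0 < 1 / 2 ∧
    CEbin 2 0 1 0 + CEbin 2 1 0 0 < CEbin 1 1 1 0 := by
  have h5 := logb5_lt
  refine ⟨ce_ac, by rw [ce_ab, ce_bc], ?_, ?_⟩
  · rw [ce_ab]; linarith
  · rw [ce_ab, ce_bc, ce_ac]; linarith
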